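/- arXiv:1304.2020 — 6 statements merged into one kernel-verified Lean document; each statement's English description precedes it below -/
import Mathlib

section
/- The function g(α) = (sin α + π − α)/(cos α + 1) on [0, π/2] satisfies g(α) ≤ π/3 + √3 for all α. -/
open Real

theorem stmt_1 (α : ℝ) (hα : α ∈ Set.Icc 0 (π/2)) :
    (Real.sin α + π - α) / (Real.cos α + 1) ≤ π/3 + Real.sqrt 3 := by
  obtain ⟨h0, h1⟩ := hα
  have hπ : (0:ℝ) < π := Real.pi_pos
  have hπle : π ≤ 3.15 := by linarith [Real.pi_lt_d2]
  have hπge : 3 ≤ π := by linarith [Real.pi_gt_three]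
  have hsin : Real.sin α ≤ 1 := Real.sin_le_one α
  have hc : 2/π * (π/2 - α) ≤ Real.cos α := by
    rw [← Real.sin_pi_div_two_sub]
    exact Real.mul_le_sin (by linarith) (by linarith)
  have hc' : π - 2*α ≤ π * Real.cos α := by
    have h2 : π * (2/π * (π/2 - α)) ≤ π * Real.cos α :=
      mul_le_mul_of_nonneg_left hc hπ.le
    have h3 : π * (2/π * (π/2 - α)) = π - 2*α := by
      field_simp
    linarith
  have hcnn : 0 ≤ Real.cos α := Real.cos_nonneg_of_mem_Icc ⟨by linarith, h1⟩
  have hpos : 0 < Real.cos α + 1 := by linarith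
  have hs3 : (1.7:ℝ) ≤ Real.sqrt 3 := by
    rw [show (3:ℝ) = 1.7^2 + 0.11 by norm_num]
    nlinarith [Real.sq_sqrt (by norm_num : (0:ℝ) ≤ 1.7^2 + 0.11),
      Real.sqrt_nonneg (1.7^2 + 0.11)]
  rw [div_le_iff₀ hpos]
  have key : π * (Real.sin α + π - α) ≤ π * ((π/3 + Real.sqrt 3) * (Real.cos α + 1)) := by
    nlinarith [mul_le_mul_of_nonneg_left hsin hπ.le,
      mul_nonneg (sub_nonneg.2 h1) (by nlinarith : (0:ℝ) ≤ 2*Real.sqrt 3 - π/3),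
      mul_le_mul_of_nonneg_left hs3 hπ.le,
      mul_le_mul_of_nonneg_right hc' (by nlinarith : (0:ℝ) ≤ π/3 + Real.sqrt 3)]
  exact le_of_mul_le_mul_left key hπ
end

section
/- The function h(α) = (2 sin α + π − 2α)/(2 cos α) on [0, π/3] attains its maximum at α = π/3, where its value equals π/3 + √3. -/
/-!
The function is increasing on all of `[0, π/2)`: using `sin² + cos² = 1`, the numerator of its
derivative is `4 (1 - cos α) + 2 (π - 2α) sin α ≥ 0`.
-/

open Real

noncomputable def symmetricRatio (α : ℝ) : ℝ :=
  (2 * sin α + π - 2 * α) / (2 * cos α)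

theorem hasDerivAt_symmetricRatio {x : ℝ} (hx : cos x ≠ 0) :
    HasDerivAt symmetricRatio
      ((4 * (1 - cos x) + 2 * (π - 2 * x) * sin x) / (2 * cos x) ^ 2) x := by
  have hnum : HasDerivAt (fun y => 2 * sin y + π - 2 * y) (2 * cos x - 2) x := by
    simpa using (((hasDerivAt_sin x).const_mul 2).add_const π).fun_sub ((hasDerivAt_id' x).const_mul 2)
  have hden : HasDerivAt (fun y => 2 * cos y) (2 * -sin x) x := (hasDerivAt_cos x).const_mul 2
  refine (hnum.fun_div hden (mul_ne_zero two_ne_zero hx)).congr_deriv ?_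
  congr 1
  linear_combination 4 * sin_sq_add_cos_sq x

theorem symmetricRatio_monotoneOn : MonotoneOn symmetricRatio (Set.Ico 0 (π / 2)) := by
  have hcos : ∀ x ∈ Set.Ico 0 (π / 2), cos x ≠ 0 := fun x hx =>
    (cos_pos_of_mem_Ioo ⟨by linarith [hx.1, pi_pos], hx.2⟩).ne'
  refine monotoneOn_of_hasDerivWithinAt_nonneg (convex_Ico _ _)
    (fun x hx => (hasDerivAt_symmetricRatio (hcos x hx)).continuousAt.continuousWithinAt)
    (fun x hx => (hasDerivAt_symmetricRatio
      (hcos x (interior_subset hx))).hasDerivWithinAt) fun x hx => ?_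
  rw [interior_Ico] at hx
  have hsin : 0 ≤ sin x := sin_nonneg_of_nonneg_of_le_pi hx.1.le (by linarith [hx.2, pi_pos])
  have : 0 ≤ 2 * (π - 2 * x) * sin x := mul_nonneg (by linarith [hx.2]) hsin
  exact div_nonneg (by linarith [cos_le_one x]) (sq_nonneg _)

theorem symmetricRatio_pi_div_three : symmetricRatio (π / 3) = π / 3 + √3 := by
  rw [symmetricRatio, sin_pi_div_three, cos_pi_div_three]
  ring

theorem stmt_2 :
    (∀ α ∈ Set.Icc (0:ℝ) (π/3),
      (2 * Real.sin α + π - 2*α) / (2 * Real.cos α)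
        ≤ (2 * Real.sin (π/3) + π - 2*(π/3)) / (2 * Real.cos (π/3))) ∧
    (2 * Real.sin (π/3) + π - 2*(π/3)) / (2 * Real.cos (π/3)) = π/3 + Real.sqrt 3 := by
  have hπ := pi_pos
  refine ⟨fun α hα => ?_, symmetricRatio_pi_div_three⟩
  exact symmetricRatio_monotoneOn ⟨hα.1, by linarith [hα.2]⟩ ⟨by positivity, by linarith⟩ hα.2
end

section
/- The function r ↦ √(r² − x₀²) + √(r² − x₁²) + r·(arccos(x₀/r) − arccos(x₁/r)) is nondecreasing on [max(|x₀|, |x₁|), ∞), for fixed reals x₀ < x₁. -/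
open Real

/-!
The derivative of the path length in `r` is
`√((r + x₀)/(r - x₀)) + √((r - x₁)/(r + x₁)) + (arccos (x₀/r) - arccos (x₁/r))`:
the `x`-terms coming from differentiating `√(r² - x²)` and `r · arccos (x/r)` combine
into the first two summands, which are nonnegative, and the last one is nonnegative
because `arccos` is antitone and `x₀ < x₁`.
-/

lemma hasDerivAt_sqrt_sq_sub_sq {x r : ℝ} (h : x ^ 2 < r ^ 2) :
    HasDerivAt (fun r : ℝ => √(r ^ 2 - x ^ 2)) (r / √(r ^ 2 - x ^ 2)) r := by
  have hsqrt : √(r ^ 2 - x ^ 2) ≠ 0 := (sqrt_pos.2 (sub_pos.2 h)).ne'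
  convert ((hasDerivAt_pow 2 r).sub_const (x ^ 2)).sqrt (sub_pos.2 h).ne' using 1
  field_simp
  ring

lemma hasDerivAt_arccos_const_div {x r : ℝ} (h : |x| < r) :
    HasDerivAt (fun r : ℝ => arccos (x / r)) (x / (r * √(r ^ 2 - x ^ 2))) r := by
  have hr : 0 < r := (abs_nonneg x).trans_lt h
  obtain ⟨hlo, hhi⟩ := abs_lt.1 h
  have hsq : 0 < r ^ 2 - x ^ 2 := by nlinarith
  have hdiv_lo : -1 < x / r := by rwa [lt_div_iff₀ hr, neg_one_mul]
  have hdiv_hi : x / r < 1 := by rwa [div_lt_one hr]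
  have hsqrt : √(1 - (x / r) ^ 2) = √(r ^ 2 - x ^ 2) / r := by
    rw [show 1 - (x / r) ^ 2 = (r ^ 2 - x ^ 2) / r ^ 2 by field_simp,
      sqrt_div hsq.le, sqrt_sq hr.le]
  have hinv : HasDerivAt (fun r : ℝ => x / r) (-x / r ^ 2) r := by
    simpa [div_eq_mul_inv] using (hasDerivAt_inv hr.ne').const_mul x
  refine ((hasDerivAt_arccos hdiv_lo.ne' hdiv_hi.ne).comp r hinv).congr_deriv ?_
  rw [hsqrt]
  have : √(r ^ 2 - x ^ 2) ≠ 0 := (sqrt_pos.2 hsq).ne'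
  field_simp

/-- The length of the path that goes up from `(x₀, 0)` to the circle of radius `r`, along the
upper semicircle, and down to `(x₁, 0)`. -/
noncomputable def upArcDownLength (x₀ x₁ r : ℝ) : ℝ :=
  √(r ^ 2 - x₀ ^ 2) + √(r ^ 2 - x₁ ^ 2) + r * (arccos (x₀ / r) - arccos (x₁ / r))

noncomputable def upArcDownLengthDeriv (x₀ x₁ r : ℝ) : ℝ :=
  (r + x₀) / √(r ^ 2 - x₀ ^ 2) + (r - x₁) / √(r ^ 2 - x₁ ^ 2)
    + (arccos (x₀ / r) - arccos (x₁ / r))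

lemma hasDerivAt_upArcDownLength {x₀ x₁ r : ℝ} (h₀ : |x₀| < r) (h₁ : |x₁| < r) :
    HasDerivAt (upArcDownLength x₀ x₁) (upArcDownLengthDeriv x₀ x₁ r) r := by
  have hsq₀ : x₀ ^ 2 < r ^ 2 := sq_lt_sq' (abs_lt.1 h₀).1 (abs_lt.1 h₀).2
  have hsq₁ : x₁ ^ 2 < r ^ 2 := sq_lt_sq' (abs_lt.1 h₁).1 (abs_lt.1 h₁).2
  have hr : r ≠ 0 := ((abs_nonneg x₀).trans_lt h₀).ne'
  have : √(r ^ 2 - x₀ ^ 2) ≠ 0 := (sqrt_pos.2 (sub_pos.2 hsq₀)).ne'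
  have : √(r ^ 2 - x₁ ^ 2) ≠ 0 := (sqrt_pos.2 (sub_pos.2 hsq₁)).ne'
  refine (((hasDerivAt_sqrt_sq_sub_sq hsq₀).add (hasDerivAt_sqrt_sq_sub_sq hsq₁)).add
    ((hasDerivAt_id r).mul
      ((hasDerivAt_arccos_const_div h₀).sub (hasDerivAt_arccos_const_div h₁)))).congr_deriv ?_
  simp only [upArcDownLengthDeriv, Pi.sub_apply, id]
  field_simp
  ring

lemma upArcDownLengthDeriv_nonneg {x₀ x₁ r : ℝ} (hle : x₀ ≤ x₁) (h₀ : |x₀| < r)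
    (h₁ : |x₁| < r) : 0 ≤ upArcDownLengthDeriv x₀ x₁ r := by
  have hr : 0 < r := (abs_nonneg x₀).trans_lt h₀
  have h_left : 0 ≤ (r + x₀) / √(r ^ 2 - x₀ ^ 2) :=
    div_nonneg (by linarith [(abs_lt.1 h₀).1]) (sqrt_nonneg _)
  have h_right : 0 ≤ (r - x₁) / √(r ^ 2 - x₁ ^ 2) :=
    div_nonneg (by linarith [(abs_lt.1 h₁).2]) (sqrt_nonneg _)
  have h_arc : arccos (x₁ / r) ≤ arccos (x₀ / r) :=
    arccos_le_arccos (div_le_div_of_nonneg_right hle hr.le)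
  unfold upArcDownLengthDeriv
  linarith

lemma continuousOn_upArcDownLength (x₀ x₁ : ℝ) {s : Set ℝ} (hs : (0 : ℝ) ∉ s) :
    ContinuousOn (upArcDownLength x₀ x₁) s := by
  have hne : ∀ r ∈ s, r ≠ 0 := fun r hr h => hs (h ▸ hr)
  unfold upArcDownLength
  fun_prop (disch := exact hne)

theorem stmt_7 (x₀ x₁ : ℝ) (hlt : x₀ < x₁) :
    MonotoneOn (fun r : ℝ =>
        Real.sqrt (r^2 - x₀^2) + Real.sqrt (r^2 - x₁^2)
          + r * (Real.arccos (x₀/r) - Real.arccos (x₁/r)))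
      (Set.Ici (max |x₀| |x₁|)) := by
  change MonotoneOn (upArcDownLength x₀ x₁) _
  have hM : 0 < max |x₀| |x₁| := by
    rcases eq_or_ne x₀ 0 with h | h
    · exact lt_max_of_lt_right (abs_pos.2 (h ▸ hlt).ne')
    · exact lt_max_of_lt_left (abs_pos.2 h)
  refine monotoneOn_of_hasDerivWithinAt_nonneg (f' := upArcDownLengthDeriv x₀ x₁) (convex_Ici _)
    (continuousOn_upArcDownLength x₀ x₁ fun h => hM.not_ge h)
    (fun r hr => ?_) (fun r hr => ?_)
  all_goals
    rw [interior_Ici] at hr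
    have h₀ : |x₀| < r := (le_max_left _ _).trans_lt hr
    have h₁ : |x₁| < r := (le_max_right _ _).trans_lt hr
  · exact (hasDerivAt_upArcDownLength h₀ h₁).hasDerivWithinAt
  · exact upArcDownLengthDeriv_nonneg hlt.le h₀ h₁
end

section
/- For all α ∈ [0, π/2], sin α + π − α ≤ (π/3 + √3)(cos α + 1). -/
/-!
By Jordan's inequality `cos α ≥ 1 - 2α/π` on `[0, π/2]`, the left side is already bounded by
`(1 + π/2)(cos α + 1)`, and `1 + π/2 ≤ π/3 + √3` because `1 + π/6 < 1.53 < √3`.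
-/

open Real

theorem sin_add_pi_sub_le_one_add_pi_div_two_mul {x : ℝ} (hx₀ : 0 ≤ x) (hx : x ≤ π / 2) :
    sin x + π - x ≤ (1 + π / 2) * (cos x + 1) := by
  have hjordan : π / 2 - x ≤ π / 2 * cos x :=
    calc π / 2 - x = π / 2 * (1 - 2 / π * x) := by field_simp
      _ ≤ π / 2 * cos x := by gcongr; exact one_sub_mul_le_cos hx₀ hx
  linarith [sin_le_one x, cos_nonneg_of_mem_Icc ⟨by linarith, hx⟩]

theorem one_add_pi_div_two_le_pi_div_three_add_sqrt_three : 1 + π / 2 ≤ π / 3 + √3 := by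
  have hsqrt : 1.7 ≤ √3 := le_sqrt_of_sq_le (by norm_num)
  linarith [pi_lt_d2]

theorem stmt_12 (α : ℝ) (hα : α ∈ Set.Icc 0 (π/2)) :
    Real.sin α + π - α ≤ (π/3 + Real.sqrt 3) * (Real.cos α + 1) :=
  calc sin α + π - α ≤ (1 + π / 2) * (cos α + 1) :=
        sin_add_pi_sub_le_one_add_pi_div_two_mul hα.1 hα.2
    _ ≤ (π / 3 + √3) * (cos α + 1) :=
        mul_le_mul_of_nonneg_right one_add_pi_div_two_le_pi_div_three_add_sqrt_three
          (by linarith [neg_one_le_cos α])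
end

section
/- Let I₁, …, Iₙ be closed intervals in ℝ, each of length at most 2, whose union is an interval [a, b], and suppose the family is minimal (no proper subfamily covers [a, b]). Order them by their left endpoints, with Aᵢ, Bᵢ the left and right endpoints of Iᵢ, and set M₀ = A₁, Mₙ = Bₙ, and Mᵢ = (A_{i+1} + Bᵢ)/2 for 0 < i < n. Then Mᵢ − M_{i−1} ≥ (Bᵢ − Aᵢ)/2 for all 1 ≤ i ≤ n. -/
/-!
Minimality forces every interval to stick out of the union of the others. As the intervals are
ordered by left endpoints, sticking out of its predecessor gives `Bᵢ₋₁ < Bᵢ`, and sticking out of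
the union of both neighbours gives `Bᵢ₋₁ < Aᵢ₊₁`. In the interior `Mᵢ - Mᵢ₋₁` exceeds
`(Bᵢ - Aᵢ) / 2` by `(Aᵢ₊₁ - Bᵢ₋₁) / 2`, and at the two ends by `(A₂ - A₁) / 2` and
`(Bₙ - Bₙ₋₁) / 2`.
-/

open Set

theorem not_subset_biUnion_of_minimal_cover {ι α : Type*} [DecidableEq ι] {s t : Finset ι}
    {I : ι → Set α} {U : Set α} {k : ι} (hcover : U ⊆ ⋃ i ∈ s, I i)
    (hmin : ¬ U ⊆ ⋃ j ∈ s \ {k}, I j) (ht : t ⊆ s \ {k}) : ¬ I k ⊆ ⋃ j ∈ t, I j := by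
  intro hk
  refine hmin (hcover.trans (iUnion₂_subset fun j hj => ?_))
  by_cases hjk : j = k
  · subst hjk
    exact hk.trans (biUnion_subset_biUnion_left (Finset.coe_subset.2 ht))
  · exact subset_biUnion_of_mem (u := I) (by simp [hj, hjk])

theorem lt_of_not_Icc_subset_Icc {α : Type*} [LinearOrder α] {a₁ b₁ a₂ b₂ : α} (ha : a₁ ≤ a₂)
    (h : ¬ Icc a₂ b₂ ⊆ Icc a₁ b₁) : b₁ < b₂ := by
  by_contra! hb
  exact h (Icc_subset_Icc ha hb)

theorem lt_of_not_Icc_subset_Icc_union_Icc {α : Type*} [LinearOrder α] {a₀ b₀ a₁ b₁ a₂ b₂ : α}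
    (ha : a₀ ≤ a₁) (hb : b₁ ≤ b₂) (h : ¬ Icc a₁ b₁ ⊆ Icc a₀ b₀ ∪ Icc a₂ b₂) : b₀ < a₂ := by
  by_contra! hab
  refine h fun x hx => ?_
  rcases le_or_gt x b₀ with hx₀ | hx₀
  · exact Or.inl ⟨ha.trans hx.1, hx₀⟩
  · exact Or.inr ⟨hab.trans hx₀.le, hx.2.trans hb⟩

section IccFamily

variable {α : Type*} [LinearOrder α] {n : ℕ} {A B : ℕ → α}
  (horder : ∀ i j, i ≤ j → j < n → A i ≤ A j)
  (hred : ∀ k < n, ∀ t ⊆ Finset.range n \ {k}, ¬ Icc (A k) (B k) ⊆ ⋃ j ∈ t, Icc (A j) (B j))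
include horder hred

theorem right_lt_right_succ_of_irredundant {j : ℕ} (hj : j + 1 < n) : B j < B (j + 1) :=
  lt_of_not_Icc_subset_Icc (horder _ _ j.le_succ hj)
    (by simpa using hred (j + 1) hj {j} (by simp; omega))

theorem right_lt_left_add_two_of_irredundant {j : ℕ} (hj : j + 2 < n) : B j < A (j + 2) :=
  lt_of_not_Icc_subset_Icc_union_Icc (horder _ _ j.le_succ (by omega))
    (right_lt_right_succ_of_irredundant horder hred hj).le
    (by simpa using hred (j + 1) (by omega) {j, j + 2} (by simp [Finset.insert_subset_iff]; omega))

end IccFamily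

theorem stmt_15_general (n : ℕ) (a b : ℝ) (A B : ℕ → ℝ)
    (hcover : (⋃ i ∈ Finset.range n, Set.Icc (A i) (B i)) = Set.Icc a b)
    (hmin : ∀ i < n, ¬ (Set.Icc a b ⊆ ⋃ j ∈ Finset.range n \ {i}, Set.Icc (A j) (B j)))
    (horder : ∀ i j, i ≤ j → j < n → A i ≤ A j)
    (M : ℕ → ℝ)
    (hM0 : M 0 = A 0) (hMn : M n = B (n - 1))
    (hMi : ∀ i, 0 < i → i < n → M i = (A i + B (i - 1)) / 2) :
    ∀ i, 1 ≤ i → i ≤ n → M i - M (i - 1) ≥ (B (i - 1) - A (i - 1)) / 2 := by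
  have hred : ∀ k < n, ∀ t ⊆ Finset.range n \ {k}, ¬ Icc (A k) (B k) ⊆ ⋃ j ∈ t, Icc (A j) (B j) :=
    fun k hk _ => not_subset_biUnion_of_minimal_cover hcover.ge (hmin k hk)
  rintro (_ | _ | j) hi hin
  · omega
  · show M 1 - M 0 ≥ (B 0 - A 0) / 2
    rcases hin.eq_or_lt with rfl | hn
    · -- only a nonempty interval can stick out of `∅`
      obtain ⟨x, hx, -⟩ := not_subset.1 (hred 0 one_pos ∅ (Finset.empty_subset _))
      rw [hMn, hM0]
      linarith [hx.1.trans hx.2]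
    · rw [hMi 1 one_pos hn, hM0]
      linarith [horder 0 1 zero_le_one hn]
  · have hMprev : M (j + 1) = (A (j + 1) + B j) / 2 := hMi (j + 1) j.succ_pos (by omega)
    show M (j + 2) - M (j + 1) ≥ (B (j + 1) - A (j + 1)) / 2
    rcases hin.eq_or_lt with rfl | hn
    · have hMnext : M (j + 2) = B (j + 1) := hMn
      linarith [right_lt_right_succ_of_irredundant horder hred (j := j) (by omega)]
    · have hMnext : M (j + 2) = (A (j + 2) + B (j + 1)) / 2 := hMi (j + 2) (by omega) hn
      linarith [right_lt_left_add_two_of_irredundant horder hred hn]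

theorem stmt_15 (n : ℕ) (hn : 0 < n) (a b : ℝ) (A B : ℕ → ℝ)
    (hAB : ∀ i < n, A i ≤ B i)
    (hlen : ∀ i < n, B i - A i ≤ 2)
    (hcover : (⋃ i ∈ Finset.range n, Set.Icc (A i) (B i)) = Set.Icc a b)
    (hmin : ∀ i < n, ¬ (Set.Icc a b ⊆ ⋃ j ∈ Finset.range n \ {i}, Set.Icc (A j) (B j)))
    (horder : ∀ i j, i ≤ j → j < n → A i ≤ A j)
    (M : ℕ → ℝ)
    (hM0 : M 0 = A 0) (hMn : M n = B (n - 1))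
    (hMi : ∀ i, 0 < i → i < n → M i = (A i + B (i - 1)) / 2) :
    ∀ i, 1 ≤ i → i ≤ n → M i - M (i - 1) ≥ (B (i - 1) - A (i - 1)) / 2 :=
  stmt_15_general n a b A B hcover hmin horder M hM0 hMn hMi
end

section
/- Let h(α) = (2 sin α + π − 2α)/(2 cos α). For 0 ≤ α₁ ≤ α₂ ≤ π/3, h(α₁) ≤ h(α₂). -/
open Real

theorem stmt_19 (α₁ α₂ : ℝ) (h0 : 0 ≤ α₁) (h12 : α₁ ≤ α₂) (h2 : α₂ ≤ π/3) :
    (2 * Real.sin α₁ + π - 2*α₁) / (2 * Real.cos α₁)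
      ≤ (2 * Real.sin α₂ + π - 2*α₂) / (2 * Real.cos α₂) := by
  have hpi := Real.pi_pos
  have hcos : ∀ x ∈ Set.Icc (0:ℝ) (π/3), 0 < Real.cos x := by
    intro x hx
    apply Real.cos_pos_of_mem_Ioo
    constructor
    · linarith [hx.1]
    · linarith [hx.2]
  have hd : ∀ x ∈ Set.Ioo (0:ℝ) (π/3),
      HasDerivAt (fun x => (2 * Real.sin x + π - 2*x) / (2 * Real.cos x))
        ((4 - 4*Real.cos x + 2*(π - 2*x)*Real.sin x) / (2*Real.cos x)^2) x := by
    intro x hx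
    have hc := hcos x ⟨hx.1.le, hx.2.le⟩
    have hne : 2 * Real.cos x ≠ 0 := by positivity
    have h1 : HasDerivAt (fun x => 2 * Real.sin x + π - 2*x) (2*Real.cos x - 2) x := by
      have := (((Real.hasDerivAt_sin x).const_mul 2).add_const π).fun_sub ((hasDerivAt_id x).const_mul 2)
      simpa using this
    have h2 : HasDerivAt (fun x => 2 * Real.cos x) (2 * (-Real.sin x)) x :=
      (Real.hasDerivAt_cos x).const_mul 2
    have := h1.fun_div h2 hne
    refine this.congr_deriv ?_
    have hs := Real.sin_sq_add_cos_sq x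
    congr 1
    ring_nf
    nlinarith [hs]
  have hmono : MonotoneOn (fun x => (2 * Real.sin x + π - 2*x) / (2 * Real.cos x))
      (Set.Icc 0 (π/3)) := by
    apply monotoneOn_of_deriv_nonneg (convex_Icc _ _)
    · apply ContinuousOn.div
      · fun_prop
      · fun_prop
      · intro x hx
        have := hcos x hx
        positivity
    · intro x hx
      rw [interior_Icc] at hx
      exact (hd x hx).differentiableAt.differentiableWithinAt
    · intro x hx
      rw [interior_Icc] at hx
      rw [(hd x hx).deriv]
      have hc := hcos x ⟨hx.1.le, hx.2.le⟩
      have hs : 0 ≤ Real.sin x := Real.sin_nonneg_of_nonneg_of_le_pi hx.1.le (by linarith [hx.2])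
      have hc1 : Real.cos x ≤ 1 := Real.cos_le_one x
      apply div_nonneg
      · nlinarith [hx.2]
      · positivity
  exact hmono ⟨h0, le_trans h12 h2⟩ ⟨le_trans h0 h12, h2⟩ h12
end
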